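/- Under the finite linear-MDP value-iteration setting below with H ≥ 2, for every h ∈ {1, …, H} one has ‖V_h − V_{h+1}‖_∞ ≤ (2·d + 1)/(H − h + 1), where ‖v‖_∞ = max_{s∈S} |v(s)|. -/

import Mathlib

/-!
Value iteration is monotone in the horizon, so the gaps `Δ_j = V_j - V_{j+1}` are nonnegative and
a greedy action gives `Δ_k(s) ≤ ε_{k+1}`, where `ε_j` is the largest expected gap
`∑_{s'} P(s'|s,a) Δ_j(s')` over `(s,a)`; in particular `ε_j` is nondecreasing in `j`.
Choosing maximising pairs `(s_j, a_j)` for `j = h+1, …, H`, the matrix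
`M_{jj'} = ∑_{s'} P(s'|s_j,a_j) Δ_{j'}(s')` is nonnegative, its rows sum (by telescoping) to an
expectation of `V_{h+1} ≤ 1`, and it factors through `ℝ^d` because `P` is linear in `φ`.
Its eigenvalues therefore lie in the unit disc and at most `d` of them are nonzero, so
`(H - h) ε_{h+1} ≤ ∑_j ε_j = tr M ≤ d`.
-/

open scoped RealInnerProductSpace

open Finset

namespace Matrix

open Polynomial

variable {m n : Type*} [Fintype m] [Fintype n]

theorem norm_le_of_isRoot_charpoly {K : Type*} [NormedField K] [DecidableEq n]
    {A : Matrix n n K} {c : ℝ} (hA : ∀ i, ∑ j, ‖A i j‖ ≤ c) {z : K}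
    (hz : A.charpoly.IsRoot z) : ‖z‖ ≤ c := by
  have hz' : Module.End.HasEigenvalue (toLin' A) z := by
    rw [Module.End.hasEigenvalue_iff_mem_spectrum, spectrum_toLin']
    exact mem_spectrum_of_isRoot_charpoly hz
  obtain ⟨k, hk⟩ := eigenvalue_mem_ball hz'
  rw [Metric.mem_closedBall, dist_eq_norm] at hk
  calc ‖z‖ ≤ ‖A k k‖ + ‖z - A k k‖ := norm_le_norm_add_norm_sub' z (A k k)
    _ ≤ ‖A k k‖ + ∑ j ∈ univ.erase k, ‖A k j‖ := by gcongr
    _ = ∑ j, ‖A k j‖ := add_sum_erase _ (fun j => ‖A k j‖) (mem_univ k)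
    _ ≤ c := hA k

theorem isRoot_charpoly_mul_comm {R : Type*} [CommRing R] [IsDomain R] [DecidableEq m]
    [DecidableEq n] (A : Matrix m n R) (B : Matrix n m R) {z : R} (hz₀ : z ≠ 0)
    (hz : (B * A).charpoly.IsRoot z) : (A * B).charpoly.IsRoot z := by
  have h := congrArg (eval z) (charpoly_mul_comm' A B)
  simp only [eval_mul, eval_pow, eval_X, hz.eq_zero, mul_zero] at h
  exact (mul_eq_zero.1 h).resolve_left (pow_ne_zero _ hz₀)

theorem trace_mul_le_card [DecidableEq m] [DecidableEq n] (F : Matrix m n ℝ)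
    (G : Matrix n m ℝ) (h : ∀ i, ∑ j, |(F * G) i j| ≤ 1) :
    (F * G).trace ≤ Fintype.card n := by
  let Fc := F.map Complex.ofRealHom
  let Gc := G.map Complex.ofRealHom
  have hroot : ∀ z ∈ (Gc * Fc).charpoly.roots, z.re ≤ 1 := by
    intro z hz
    rcases eq_or_ne z 0 with rfl | hz₀
    · simp
    refine (Complex.re_le_norm z).trans (norm_le_of_isRoot_charpoly (A := Fc * Gc) ?_
      (isRoot_charpoly_mul_comm Fc Gc hz₀ (isRoot_of_mem_roots hz)))
    intro i
    simpa [Fc, Gc, ← Matrix.map_mul] using h i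
  have hcard : Multiset.card (Gc * Fc).charpoly.roots = Fintype.card n := by
    rw [IsAlgClosed.card_roots_eq_natDegree, charpoly_natDegree_eq_dim]
  calc (F * G).trace = ((G * F).trace : ℂ).re := by rw [trace_mul_comm, Complex.ofReal_re]
    _ = ((Gc * Fc).charpoly.roots.map Complex.re).sum := by
      rw [← Complex.coe_reAddGroupHom, ← map_multiset_sum, ← trace_eq_sum_roots_charpoly,
        ← Matrix.map_mul, ← AddMonoidHom.map_trace]
      rfl
    _ ≤ ((Gc * Fc).charpoly.roots.map fun _ => (1 : ℝ)).sum :=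
      Multiset.sum_map_le_sum_map _ _ hroot
    _ = Fintype.card n := by simp [hcard]

end Matrix

theorem sum_inner_le_of_sum_abs_inner_le_one {ι : Type*} [Fintype ι] {d : ℕ}
    (x y : ι → EuclideanSpace ℝ (Fin d)) (h : ∀ k, ∑ k', |⟪x k, y k'⟫| ≤ 1) :
    ∑ k, ⟪x k, y k⟫ ≤ d := by
  classical
  let F : Matrix ι (Fin d) ℝ := .of fun k i => x k i
  let G : Matrix (Fin d) ι ℝ := .of fun i k => y k i
  have hFG : ∀ k k', (F * G) k k' = ⟪x k, y k'⟫ := fun k k' => by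
    simp [F, G, Matrix.mul_apply, PiLp.inner_apply, mul_comm]
  simpa [Matrix.trace, hFG] using Matrix.trace_mul_le_card F G (by simpa [hFG] using h)

theorem Finset.sum_mul_le_of_forall_le {ι : Type*} [Fintype ι] {w f : ι → ℝ} {c : ℝ}
    (hw₀ : ∀ i, 0 ≤ w i) (hw₁ : ∑ i, w i = 1) (hf : ∀ i, f i ≤ c) : ∑ i, w i * f i ≤ c :=
  calc ∑ i, w i * f i ≤ ∑ i, w i * c :=
        sum_le_sum fun i _ => mul_le_mul_of_nonneg_left (hf i) (hw₀ i)
    _ = c := by rw [← sum_mul, hw₁, one_mul]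

section FiniteHorizon

variable {S A : Type*} [Fintype S] {P : S → A → S → ℝ} {r : S → A → ℝ}

variable (P) in
def expectedGap (V : ℕ → S → ℝ) (j : ℕ) (p : S × A) : ℝ :=
  ∑ s', P p.1 p.2 s' * (V j s' - V (j + 1) s')

theorem sum_expectedGap (V : ℕ → S → ℝ) (j n : ℕ) (p : S × A) :
    ∑ k : Fin n, expectedGap P V (j + k) p = ∑ s', P p.1 p.2 s' * (V j s' - V (j + n) s') := by
  rw [Fin.sum_univ_eq_sum_range (fun k => expectedGap P V (j + k) p)]
  simp only [expectedGap]
  rw [sum_comm]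
  refine sum_congr rfl fun s' _ => ?_
  rw [← mul_sum]
  exact congrArg (P p.1 p.2 s' * ·) (sum_range_sub' (fun k => V (j + k) s') n)

variable [Fintype A] [Nonempty A]

variable (P r) in
noncomputable def bellman (v : S → ℝ) (s : S) : ℝ :=
  univ.sup' univ_nonempty fun a => r s a + ∑ s', P s a s' * v s'

theorem bellman_mono (hP : ∀ s a s', 0 ≤ P s a s') {v w : S → ℝ} (hvw : v ≤ w) :
    bellman P r v ≤ bellman P r w := fun s =>
  sup'_mono_fun fun a _ =>
    add_le_add_right (sum_le_sum fun s' _ => mul_le_mul_of_nonneg_left (hvw s') (hP s a s')) _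

theorem bellman_zero_nonneg (hr : ∀ s a, 0 ≤ r s a) : 0 ≤ bellman P r 0 := fun s => by
  obtain ⟨a⟩ := ‹Nonempty A›
  unfold bellman
  exact le_sup'_of_le _ (mem_univ a) (by simpa using hr s a)

theorem exists_bellman_sub_bellman_le (v w : S → ℝ) (s : S) :
    ∃ a, bellman P r v s - bellman P r w s ≤ ∑ s', P s a s' * (v s' - w s') := by
  obtain ⟨a, -, ha⟩ := exists_mem_eq_sup' univ_nonempty fun a => r s a + ∑ s', P s a s' * v s'
  have hw := le_sup' (fun a => r s a + ∑ s', P s a s' * w s') (mem_univ a)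
  refine ⟨a, ?_⟩
  simp only [bellman, ha, mul_sub, sum_sub_distrib] at hw ⊢
  linarith

variable (P r) in
structure IsFiniteHorizonValue (H : ℕ) (V : ℕ → S → ℝ) : Prop where
  terminal : V (H + 1) = 0
  bellman_eq : ∀ h, 1 ≤ h → h ≤ H → V h = bellman P r (V (h + 1))

variable (P) in
noncomputable def maxExpectedGap [Nonempty S] (V : ℕ → S → ℝ) (j : ℕ) : ℝ :=
  univ.sup' univ_nonempty (expectedGap P V j)

namespace IsFiniteHorizonValue

variable {H : ℕ} {V : ℕ → S → ℝ}

theorem succ_le (hV : IsFiniteHorizonValue P r H V) (hP : ∀ s a s', 0 ≤ P s a s')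
    (hr : ∀ s a, 0 ≤ r s a) {k : ℕ} (hk : 1 ≤ k) (hkH : k ≤ H) : V (k + 1) ≤ V k := by
  induction hkH using Nat.decreasingInduction with
  | self => simpa [hV.bellman_eq H hk le_rfl, hV.terminal] using bellman_zero_nonneg hr
  | of_succ k hkH ih =>
    calc V (k + 1) = bellman P r (V (k + 1 + 1)) := hV.bellman_eq (k + 1) (by omega) hkH
      _ ≤ bellman P r (V (k + 1)) := bellman_mono hP (ih (by omega))
      _ = V k := (hV.bellman_eq k hk hkH.le).symm

theorem antitoneOn (hV : IsFiniteHorizonValue P r H V) (hP : ∀ s a s', 0 ≤ P s a s')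
    (hr : ∀ s a, 0 ≤ r s a) : AntitoneOn V (Set.Icc 1 (H + 1)) :=
  antitoneOn_of_succ_le Set.ordConnected_Icc fun k _ hk hk' => by
    rw [Order.succ_eq_add_one] at hk' ⊢
    exact hV.succ_le hP hr hk.1 (by simpa using hk'.2)

theorem le_one (hV : IsFiniteHorizonValue P r H V) (hP : ∀ s a s', 0 ≤ P s a s')
    (hr : ∀ s a, 0 ≤ r s a) (hV₁ : ∀ s, V 1 s ≤ 1) {k : ℕ} (hk : 1 ≤ k) (hkH : k ≤ H + 1)
    (s : S) : V k s ≤ 1 :=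
  (hV.antitoneOn hP hr ⟨le_rfl, by omega⟩ ⟨hk, hkH⟩ hk s).trans (hV₁ s)

theorem expectedGap_nonneg (hV : IsFiniteHorizonValue P r H V) (hP : ∀ s a s', 0 ≤ P s a s')
    (hr : ∀ s a, 0 ≤ r s a) {j : ℕ} (hj : 1 ≤ j) (hjH : j ≤ H) (p : S × A) :
    0 ≤ expectedGap P V j p :=
  sum_nonneg fun s' _ => mul_nonneg (hP p.1 p.2 s') (sub_nonneg.2 (hV.succ_le hP hr hj hjH s'))

variable [Nonempty S]

theorem sub_succ_le_maxExpectedGap (hV : IsFiniteHorizonValue P r H V) {k : ℕ} (hk : 1 ≤ k)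
    (hkH : k + 1 ≤ H) (s : S) : V k s - V (k + 1) s ≤ maxExpectedGap P V (k + 1) := by
  obtain ⟨a, ha⟩ := exists_bellman_sub_bellman_le (P := P) (r := r) (V (k + 1)) (V (k + 1 + 1)) s
  rw [← hV.bellman_eq k hk (by omega), ← hV.bellman_eq (k + 1) (by omega) hkH] at ha
  exact ha.trans (le_sup' (expectedGap P V (k + 1)) (mem_univ (s, a)))

theorem maxExpectedGap_le_succ (hV : IsFiniteHorizonValue P r H V)
    (hP₀ : ∀ s a s', 0 ≤ P s a s') (hP₁ : ∀ s a, ∑ s', P s a s' = 1) {j : ℕ} (hj : 1 ≤ j)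
    (hjH : j + 1 ≤ H) : maxExpectedGap P V j ≤ maxExpectedGap P V (j + 1) :=
  sup'_le _ _ fun p _ => sum_mul_le_of_forall_le (hP₀ p.1 p.2) (hP₁ p.1 p.2)
    fun s' => hV.sub_succ_le_maxExpectedGap hj hjH s'

theorem monotoneOn_maxExpectedGap (hV : IsFiniteHorizonValue P r H V)
    (hP₀ : ∀ s a s', 0 ≤ P s a s') (hP₁ : ∀ s a, ∑ s', P s a s' = 1) :
    MonotoneOn (maxExpectedGap P V) (Set.Icc 1 H) :=
  monotoneOn_of_le_succ Set.ordConnected_Icc fun j _ hj hj' => by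
    rw [Order.succ_eq_add_one] at hj' ⊢
    exact hV.maxExpectedGap_le_succ hP₀ hP₁ hj.1 hj'.2

end IsFiniteHorizonValue

variable {d : ℕ} {φ : S → A → EuclideanSpace ℝ (Fin d)} {μ : S → EuclideanSpace ℝ (Fin d)}

theorem IsFiniteHorizonValue.mul_maxExpectedGap_le_dim {H : ℕ} {V : ℕ → S → ℝ} [Nonempty S]
    (hV : IsFiniteHorizonValue (fun s a s' => ⟪φ s a, μ s'⟫) r H V)
    (hP₀ : ∀ s a s', 0 ≤ ⟪φ s a, μ s'⟫) (hP₁ : ∀ s a, ∑ s', ⟪φ s a, μ s'⟫ = 1)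
    (hr : ∀ s a, 0 ≤ r s a) (hV₁ : ∀ s, V 1 s ≤ 1) {h : ℕ} (hh : 1 ≤ h) (hhH : h < H) :
    ((H : ℝ) - h) * maxExpectedGap (fun s a s' => ⟪φ s a, μ s'⟫) V (h + 1) ≤ d := by
  set P : S → A → S → ℝ := fun s a s' => ⟪φ s a, μ s'⟫
  set n := H - h
  choose p hp using fun j =>
    (exists_mem_eq_sup' univ_nonempty (expectedGap P V j)).imp fun _ hp => hp.2
  let x (k : Fin n) := φ (p (h + 1 + k)).1 (p (h + 1 + k)).2
  let y (k : Fin n) := ∑ s', (V (h + 1 + k) s' - V (h + 1 + k + 1) s') • μ s'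
  have hxy : ∀ k k', ⟪x k, y k'⟫ = expectedGap P V (h + 1 + k') (p (h + 1 + k)) := by
    intro k k'
    simp [x, y, P, expectedGap, inner_sum, inner_smul_right, mul_comm]
  have hrow : ∀ k, ∑ k', |⟪x k, y k'⟫| ≤ 1 := by
    intro k
    calc ∑ k', |⟪x k, y k'⟫| = ∑ k' : Fin n, expectedGap P V (h + 1 + k') (p (h + 1 + k)) := by
          refine sum_congr rfl fun k' _ => ?_
          rw [hxy, abs_of_nonneg (hV.expectedGap_nonneg hP₀ hr (by omega) (by omega) _)]
      _ = ∑ s', P (p (h + 1 + k)).1 (p (h + 1 + k)).2 s' * V (h + 1) s' := by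
          rw [sum_expectedGap, show h + 1 + n = H + 1 by omega, hV.terminal]
          simp
      _ ≤ 1 := sum_mul_le_of_forall_le (hP₀ _ _) (hP₁ _ _)
          (hV.le_one hP₀ hr hV₁ (by omega) (by omega))
  have hdiag : ∀ k : Fin n, maxExpectedGap P V (h + 1) ≤ ⟪x k, y k⟫ := by
    intro k
    rw [hxy, ← hp]
    exact hV.monotoneOn_maxExpectedGap hP₀ hP₁ ⟨by omega, by omega⟩ ⟨by omega, by omega⟩
      (by omega)
  calc ((H : ℝ) - h) * maxExpectedGap P V (h + 1)
        = ∑ _k : Fin n, maxExpectedGap P V (h + 1) := by simp [n, Nat.cast_sub hhH.le]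
    _ ≤ ∑ k, ⟪x k, y k⟫ := sum_le_sum fun k _ => hdiag k
    _ ≤ d := sum_inner_le_of_sum_abs_inner_le_one x y hrow

end FiniteHorizon

theorem value_diff_le_general (S A : Type*) [Fintype S] [Nonempty S] [Fintype A] [Nonempty A]
    (d H : ℕ)
    (φ : S → A → EuclideanSpace ℝ (Fin d)) (μ : S → EuclideanSpace ℝ (Fin d))
    (hprob_nonneg : ∀ s a s', 0 ≤ ⟪φ s a, μ s'⟫)
    (hprob_sum : ∀ s a, ∑ s', ⟪φ s a, μ s'⟫ = 1)
    (r : S → A → ℝ) (hr : ∀ s a, 0 ≤ r s a)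
    (V : ℕ → S → ℝ)
    (hVend : ∀ s, V (H + 1) s = 0)
    (hVrec : ∀ h, 1 ≤ h → h ≤ H → ∀ s,
      V h s = Finset.univ.sup' Finset.univ_nonempty
        (fun a => r s a + ∑ s', ⟪φ s a, μ s'⟫ * V (h + 1) s'))
    (hV1 : ∀ s, V 1 s ≤ 1) :
    ∀ h, 1 ≤ h → h ≤ H →
      (Finset.univ.sup' Finset.univ_nonempty fun s => |V h s - V (h + 1) s|)
        ≤ (2 * d + 1) / ((H : ℝ) - h + 1) := by
  have hV : IsFiniteHorizonValue (fun s a s' => ⟪φ s a, μ s'⟫) r H V :=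
    ⟨funext hVend, fun h hh hhH => funext (hVrec h hh hhH)⟩
  intro h hh hhH
  refine sup'_le _ _ fun s _ => ?_
  rw [abs_of_nonneg (sub_nonneg.2 (hV.succ_le hprob_nonneg hr hh hhH s))]
  rcases hhH.eq_or_lt with rfl | hhH
  · calc V h s - V (h + 1) s ≤ 1 := by
          simpa [hVend] using hV.le_one hprob_nonneg hr hV1 hh (by omega) s
      _ ≤ (2 * d + 1) / ((h : ℝ) - h + 1) := by simp
  · have hgap : (1 : ℝ) ≤ H - h := by
      rw [le_sub_iff_add_le']
      exact_mod_cast hhH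
    calc V h s - V (h + 1) s ≤ maxExpectedGap (fun s a s' => ⟪φ s a, μ s'⟫) V (h + 1) :=
          hV.sub_succ_le_maxExpectedGap hh hhH s
      _ ≤ d / ((H : ℝ) - h) := by
          rw [le_div_iff₀ (by linarith), mul_comm]
          exact hV.mul_maxExpectedGap_le_dim hprob_nonneg hprob_sum hr hV1 hh hhH
      _ ≤ (2 * d + 1) / ((H : ℝ) - h + 1) := by
          rw [div_le_div_iff₀ (by linarith) (by linarith)]
          nlinarith

/-- Lemma B.7 (up to an additive constant): in a finite linear MDP with total rewards bounded
by `1`, for every `h ∈ {1,…,H}`, `‖V_h - V_{h+1}‖_∞ ≤ (2d+1)/(H-h+1)`. -/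
theorem value_diff_le (S A : Type*) [Fintype S] [Nonempty S] [Fintype A] [Nonempty A]
    (d H : ℕ) (hd : 1 ≤ d) (hH : 2 ≤ H)
    (φ : S → A → EuclideanSpace ℝ (Fin d)) (μ : S → EuclideanSpace ℝ (Fin d))
    (hprob_nonneg : ∀ s a s', 0 ≤ ⟪φ s a, μ s'⟫)
    (hprob_sum : ∀ s a, ∑ s', ⟪φ s a, μ s'⟫ = 1)
    (r : S → A → ℝ) (hr : ∀ s a, 0 ≤ r s a)
    (V : ℕ → S → ℝ)
    (hVend : ∀ s, V (H + 1) s = 0)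
    (hVrec : ∀ h, 1 ≤ h → h ≤ H → ∀ s,
      V h s = Finset.univ.sup' Finset.univ_nonempty
        (fun a => r s a + ∑ s', ⟪φ s a, μ s'⟫ * V (h + 1) s'))
    (hV1 : ∀ s, V 1 s ≤ 1) :
    ∀ h, 1 ≤ h → h ≤ H →
      (Finset.univ.sup' Finset.univ_nonempty fun s => |V h s - V (h + 1) s|)
        ≤ (2 * d + 1) / ((H : ℝ) - h + 1) :=
  value_diff_le_general S A d H φ μ hprob_nonneg hprob_sum r hr V hVend hVrec hV1
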